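/- arXiv:2111.13954 — 5 statements merged into one kernel-verified Lean document; each statement's English description precedes it below -/
import Mathlib

section
/- For every γ > 1 and every r ∈ ℝ, the μ_r-symbol function satisfies lim_{k→∞} C_{μ_r}(γ,k) = γ / (2√(γ−1)); consequently, the high-frequency limit norm of the Leray transform satisfies limsup_{k→∞} ‖L_k‖_{L²(M_γ,μ_r)} = lim_{k→∞} ‖L_k‖_{L²(M_γ,μ_r)} = √( γ / (2√(γ−1)) ), a quantity independent of r. -/
open Filter Set

noncomputable section

/-- The `μ_r`-symbol function `C_{μ_r}(γ,k)`. -/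
def symbolC (γ r : ℝ) (k : ℕ) : ℝ :=
  Real.Gamma ((2 * (k : ℝ) + 1 + r) / γ) *
      Real.Gamma (2 * (k : ℝ) + 2 - (2 * (k : ℝ) + 1 + r) / γ) /
      Real.Gamma ((k : ℝ) + 1) ^ 2 *
    (γ / 2) ^ (2 * k + 2) *
    (γ - 1) ^ (-(2 * (k : ℝ) + 2 - (2 * (k : ℝ) + 1 + r) / γ))

namespace HFAux

open Real Topology Nat

/-- Stirling approximation exponent. -/
def phi (x : ℝ) : ℝ := x * Real.log x - x - Real.log x / 2 + Real.log (2 * π) / 2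

/-- Error in Stirling's approximation of `log ∘ Gamma`. -/
def del (x : ℝ) : ℝ := Real.log (Real.Gamma x) - phi x

lemma wendel_upper {x : ℝ} (hx : 1 ≤ x) :
    Real.Gamma x ≤ Real.Gamma (⌊x⌋₊ : ℝ) * (⌊x⌋₊ : ℝ) ^ (x - ⌊x⌋₊) := by
  have hx0 : (0:ℝ) ≤ x := le_trans zero_le_one hx
  set m : ℝ := (⌊x⌋₊ : ℝ) with hm
  have hm1 : (1:ℝ) ≤ m := by
    have h1 : 1 ≤ ⌊x⌋₊ := Nat.le_floor (by exact_mod_cast hx)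
    rw [hm]; exact_mod_cast h1
  have hm0 : (0:ℝ) < m := lt_of_lt_of_le zero_lt_one hm1
  have hs0 : 0 ≤ x - m := sub_nonneg.2 (Nat.floor_le hx0)
  have hs1 : x - m < 1 := by
    have := Nat.lt_floor_add_one x
    linarith
  have hGpos : 0 < Real.Gamma m := Real.Gamma_pos_of_pos hm0
  rcases eq_or_lt_of_le hs0 with h | h
  · have hxm : x = m := by linarith
    have hz : x - m = 0 := by linarith
    rw [hz, Real.rpow_zero, mul_one, hxm]
  · set s : ℝ := x - m with hsdef
    have key := Real.Gamma_mul_add_mul_le_rpow_Gamma_mul_rpow_Gamma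
      (s := m) (t := m + 1) (a := 1 - s) (b := s) hm0 (by linarith) (by linarith) h (by ring)
    have harg : (1 - s) * m + s * (m + 1) = x := by rw [hsdef]; ring
    rw [harg] at key
    have hG1 : Real.Gamma (m + 1) = m * Real.Gamma m := Real.Gamma_add_one hm0.ne'
    have e1 : Real.Gamma m ^ (1 - s) * Real.Gamma m ^ s = Real.Gamma m := by
      rw [← Real.rpow_add hGpos]; norm_num
    calc Real.Gamma x ≤ Real.Gamma m ^ (1 - s) * Real.Gamma (m + 1) ^ s := key
      _ = Real.Gamma m * m ^ s := by
          rw [hG1, Real.mul_rpow hm0.le hGpos.le,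
            show Real.Gamma m ^ (1-s) * (m ^ s * Real.Gamma m ^ s)
              = (Real.Gamma m ^ (1-s) * Real.Gamma m ^ s) * m ^ s from by ring, e1]

lemma wendel_lower {x : ℝ} (hx : 1 ≤ x) :
    Real.Gamma (⌊x⌋₊ : ℝ) * (⌊x⌋₊ : ℝ) * x ^ (x - ⌊x⌋₊ - 1) ≤ Real.Gamma x := by
  have hx0 : (0:ℝ) < x := lt_of_lt_of_le zero_lt_one hx
  set m : ℝ := (⌊x⌋₊ : ℝ) with hm
  have hm1 : (1:ℝ) ≤ m := by
    have h1 : 1 ≤ ⌊x⌋₊ := Nat.le_floor (by exact_mod_cast hx)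
    rw [hm]; exact_mod_cast h1
  have hm0 : (0:ℝ) < m := lt_of_lt_of_le zero_lt_one hm1
  have hs0 : 0 ≤ x - m := sub_nonneg.2 (Nat.floor_le hx0.le)
  have hs1 : x - m < 1 := by
    have := Nat.lt_floor_add_one x
    linarith
  have hGpos : 0 < Real.Gamma x := Real.Gamma_pos_of_pos hx0
  have hGmpos : 0 < Real.Gamma m := Real.Gamma_pos_of_pos hm0
  rcases eq_or_lt_of_le hs0 with h | h
  · have hxm : x = m := by linarith
    have hz : x - m = 0 := by linarith
    rw [hz, zero_sub, Real.rpow_neg_one, hxm, mul_assoc, mul_inv_cancel₀ hm0.ne', mul_one]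
  · set s : ℝ := x - m with hsdef
    have key := Real.Gamma_mul_add_mul_le_rpow_Gamma_mul_rpow_Gamma
      (s := x) (t := x + 1) (a := s) (b := 1 - s) hx0 (by linarith) h (by linarith) (by ring)
    have harg : s * x + (1 - s) * (x + 1) = m + 1 := by rw [hsdef]; ring
    rw [harg] at key
    have hG1 : Real.Gamma (x + 1) = x * Real.Gamma x := Real.Gamma_add_one hx0.ne'
    have hGm1 : Real.Gamma (m + 1) = m * Real.Gamma m := Real.Gamma_add_one hm0.ne'
    have e1 : Real.Gamma x ^ s * Real.Gamma x ^ (1 - s) = Real.Gamma x := by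
      rw [← Real.rpow_add hGpos]; norm_num
    have key2 : m * Real.Gamma m ≤ Real.Gamma x * x ^ (1 - s) := by
      calc m * Real.Gamma m = Real.Gamma (m + 1) := hGm1.symm
        _ ≤ Real.Gamma x ^ s * Real.Gamma (x + 1) ^ (1 - s) := key
        _ = Real.Gamma x * x ^ (1 - s) := by
            rw [hG1, Real.mul_rpow hx0.le hGpos.le,
              show Real.Gamma x ^ s * (x ^ (1-s) * Real.Gamma x ^ (1-s))
                = (Real.Gamma x ^ s * Real.Gamma x ^ (1-s)) * x ^ (1-s) from by ring, e1]
    have hxpow : (0:ℝ) < x ^ (1 - s : ℝ) := Real.rpow_pos_of_pos hx0 _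
    rw [show s - 1 = -(1 - s) by ring, Real.rpow_neg hx0.le, ← div_eq_mul_inv,
      div_le_iff₀ hxpow, mul_comm (Real.Gamma m) m]
    exact key2

lemma key_upper {m s : ℝ} (hm : 1 ≤ m) (hs0 : 0 ≤ s) (hs1 : s ≤ 1) :
    s * Real.log m - (phi (m + s) - phi m) ≤ Real.log ((m + s) / m) / 2 := by
  have hm0 : (0:ℝ) < m := lt_of_lt_of_le zero_lt_one hm
  have hx0 : (0:ℝ) < m + s := by linarith
  have hL : Real.log ((m+s)/m) = Real.log (m+s) - Real.log m :=
    Real.log_div hx0.ne' hm0.ne'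
  -- log((m+s)/m) ≥ s/(m+s)
  have hlb : s / (m + s) ≤ Real.log ((m + s) / m) := by
    have h1 : Real.log (m / (m + s)) ≤ m / (m + s) - 1 :=
      Real.log_le_sub_one_of_pos (by positivity)
    have h2 : Real.log (m / (m+s)) = - Real.log ((m+s)/m) := by
      rw [Real.log_div hm0.ne' hx0.ne', Real.log_div hx0.ne' hm0.ne']; ring
    have h3 : m / (m + s) - 1 = -(s / (m + s)) := by field_simp; ring
    rw [h2, h3] at h1
    linarith
  have hkey : s ≤ (m + s) * Real.log ((m+s)/m) := by
    have := mul_le_mul_of_nonneg_left hlb hx0.le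
    rwa [mul_div_cancel₀ _ hx0.ne'] at this
  simp only [phi]
  nlinarith [hkey, hL]

-- lower: -(s/(2m)) ≤ (log m + (s-1)*log(m+s)) - (phi (m+s) - phi m)
lemma key_lower {m s : ℝ} (hm : 1 ≤ m) (hs0 : 0 ≤ s) (hs1 : s ≤ 1) :
    -(s / (2 * m)) ≤ (Real.log m + (s - 1) * Real.log (m + s)) - (phi (m + s) - phi m) := by
  have hm0 : (0:ℝ) < m := lt_of_lt_of_le zero_lt_one hm
  have hx0 : (0:ℝ) < m + s := by linarith
  have hL : Real.log ((m+s)/m) = Real.log (m+s) - Real.log m :=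
    Real.log_div hx0.ne' hm0.ne'
  have hub : Real.log ((m + s) / m) ≤ s / m := by
    have h1 : Real.log ((m+s)/m) ≤ (m+s)/m - 1 :=
      Real.log_le_sub_one_of_pos (by positivity)
    have h2 : (m+s)/m - 1 = s / m := by field_simp; ring
    linarith [h2 ▸ h1]
  have hLnonneg : 0 ≤ Real.log ((m+s)/m) := by
    apply Real.log_nonneg
    rw [le_div_iff₀ hm0]; linarith
  simp only [phi]
  -- target: -(s/(2m)) ≤ s - (m + 1/2) * L  where L = log((m+s)/m)
  have hkey : (m + 1/2) * Real.log ((m+s)/m) ≤ s + s/(2*m) := by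
    have := mul_le_mul_of_nonneg_left hub (by linarith : (0:ℝ) ≤ m + 1/2)
    have h3 : (m + 1/2) * (s / m) = s + s / (2*m) := by field_simp
    linarith [h3 ▸ this]
  nlinarith [hkey, hL]
lemma del_nat_eq {n : ℕ} (hn : 1 ≤ n) :
    del n = Real.log (Stirling.stirlingSeq n) - Real.log (Real.sqrt π) := by
  have hn0 : (0:ℝ) < n := by exact_mod_cast hn
  have hfact : (n ! : ℝ) = n * Real.Gamma n := by
    rw [← Real.Gamma_add_one hn0.ne']
    push_cast
    rw [Real.Gamma_nat_eq_factorial]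
  have hfactpos : (0:ℝ) < n ! := by exact_mod_cast n.factorial_pos
  have hlogfact : Real.log (n !) = Real.log n + Real.log (Real.Gamma n) := by
    rw [hfact, Real.log_mul hn0.ne' (Real.Gamma_pos_of_pos hn0).ne']
  rw [Stirling.log_stirlingSeq_formula, del, phi, hlogfact,
    Real.log_sqrt pi_pos.le,
    Real.log_mul two_ne_zero hn0.ne',
    Real.log_div hn0.ne' (Real.exp_ne_zero 1),
    Real.log_exp, Real.log_mul two_ne_zero pi_pos.ne']
  ring

lemma tendsto_del_nat : Tendsto (fun n : ℕ => del n) atTop (𝓝 0) := by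
  have hsq : (0:ℝ) < Real.sqrt π := Real.sqrt_pos.2 pi_pos
  have h1 : Tendsto (fun n : ℕ => Real.log (Stirling.stirlingSeq n) - Real.log (Real.sqrt π))
      atTop (𝓝 0) := by
    have hlog : Tendsto (fun n : ℕ => Real.log (Stirling.stirlingSeq n)) atTop
        (𝓝 (Real.log (Real.sqrt π))) :=
      ((Real.continuousAt_log hsq.ne').tendsto).comp Stirling.tendsto_stirlingSeq_sqrt_pi
    have := hlog.sub (tendsto_const_nhds (x := Real.log (Real.sqrt π)) (f := atTop (α := ℕ)))
    simpa using this
  apply h1.congr'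
  filter_upwards [eventually_ge_atTop 1] with n hn
  exact (del_nat_eq hn).symm

lemma del_bounds {x : ℝ} (hx : 1 ≤ x) :
    del (⌊x⌋₊ : ℝ) - 1 / (2 * (⌊x⌋₊ : ℝ)) ≤ del x ∧
    del x ≤ del (⌊x⌋₊ : ℝ) + Real.log (1 + 1 / (⌊x⌋₊ : ℝ)) / 2 := by
  have hx0 : (0:ℝ) < x := lt_of_lt_of_le zero_lt_one hx
  set m : ℝ := (⌊x⌋₊ : ℝ) with hm
  have hm1 : (1:ℝ) ≤ m := by
    have h1 : 1 ≤ ⌊x⌋₊ := Nat.le_floor (by exact_mod_cast hx)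
    rw [hm]; exact_mod_cast h1
  have hm0 : (0:ℝ) < m := lt_of_lt_of_le zero_lt_one hm1
  have hs0 : 0 ≤ x - m := sub_nonneg.2 (Nat.floor_le hx0.le)
  have hs1 : x - m ≤ 1 := by
    have := Nat.lt_floor_add_one x
    have : x < m + 1 := by rw [hm]; exact_mod_cast this
    linarith
  set s : ℝ := x - m with hsdef
  have hxms : x = m + s := by rw [hsdef]; ring
  have hGx : 0 < Real.Gamma x := Real.Gamma_pos_of_pos hx0
  have hGm : 0 < Real.Gamma m := Real.Gamma_pos_of_pos hm0
  have hmpow : 0 < m ^ s := Real.rpow_pos_of_pos hm0 _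
  have hxpow : 0 < x ^ (s - 1) := Real.rpow_pos_of_pos hx0 _
  constructor
  · -- lower bound
    have hW := wendel_lower hx
    rw [← hm, ← hsdef] at hW
    have hlog : Real.log (Real.Gamma m) + Real.log m + (s-1) * Real.log x
        ≤ Real.log (Real.Gamma x) := by
      have h0 := Real.log_le_log (by positivity) hW
      rw [Real.log_mul (by positivity) hxpow.ne', Real.log_mul hGm.ne' hm0.ne',
        Real.log_rpow hx0] at h0
      linarith
    have hk := key_lower hm1 hs0 hs1
    rw [← hxms] at hk
    have hsm : s / (2*m) ≤ 1 / (2*m) := by gcongr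
    simp only [del]
    have h1 : phi x - phi m - s/(2*m) ≤ Real.log m + (s - 1) * Real.log x := by linarith
    have h2 : Real.log (Real.Gamma m) + (phi x - phi m - s/(2*m)) ≤ Real.log (Real.Gamma x) := by
      calc Real.log (Real.Gamma m) + (phi x - phi m - s/(2*m))
          ≤ Real.log (Real.Gamma m) + (Real.log m + (s - 1) * Real.log x) := by linarith
        _ ≤ Real.log (Real.Gamma x) := by linarith
    linarith
  · -- upper bound
    have hW := wendel_upper hx
    rw [← hm, ← hsdef] at hW
    have hlog : Real.log (Real.Gamma x)
        ≤ Real.log (Real.Gamma m) + s * Real.log m := by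
      have h0 := Real.log_le_log hGx hW
      rw [Real.log_mul hGm.ne' hmpow.ne', Real.log_rpow hm0] at h0
      linarith
    have hk := key_upper hm1 hs0 hs1
    rw [← hxms] at hk
    have hmono : Real.log ((m+s)/m) ≤ Real.log (1 + 1/m) := by
      apply Real.log_le_log (by positivity)
      rw [div_le_iff₀ hm0]
      have : (1 + 1/m) * m = m + 1 := by field_simp
      rw [this]; linarith
    rw [← hxms] at hmono
    simp only [del]
    have h1 : Real.log (Real.Gamma x) ≤ Real.log (Real.Gamma m) + (phi x - phi m) + Real.log (x/m) / 2 := by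
      calc Real.log (Real.Gamma x) ≤ Real.log (Real.Gamma m) + s * Real.log m := by linarith
        _ ≤ Real.log (Real.Gamma m) + (phi x - phi m) + Real.log (x/m) / 2 := by linarith
    linarith
lemma tendsto_del {x : ℕ → ℝ} (hx : Tendsto x atTop atTop) :
    Tendsto (fun k => del (x k)) atTop (𝓝 0) := by
  have hfl : Tendsto (fun k => ⌊x k⌋₊) atTop atTop :=
    (tendsto_nat_floor_atTop (α := ℝ)).comp hx
  have hdm : Tendsto (fun k => del (⌊x k⌋₊ : ℝ)) atTop (𝓝 0) := tendsto_del_nat.comp hfl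
  have hmR : Tendsto (fun k => ((⌊x k⌋₊ : ℕ) : ℝ)) atTop atTop :=
    tendsto_natCast_atTop_atTop.comp hfl
  have hinv : Tendsto (fun k => 1 / (2 * (⌊x k⌋₊ : ℝ))) atTop (𝓝 0) := by
    have := (hmR.const_mul_atTop (by norm_num : (0:ℝ) < 2)).inv_tendsto_atTop
    apply this.congr
    intro k
    rw [one_div]; rfl
  have hlog0 : Tendsto (fun k => Real.log (1 + 1 / (⌊x k⌋₊ : ℝ)) / 2) atTop (𝓝 0) := by
    have h1 : Tendsto (fun k => 1 + 1 / (⌊x k⌋₊ : ℝ)) atTop (𝓝 1) := by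
      have : Tendsto (fun k => 1 / (⌊x k⌋₊ : ℝ)) atTop (𝓝 0) := by
        simp only [one_div]; exact hmR.inv_tendsto_atTop
      simpa using (tendsto_const_nhds (x := (1:ℝ))).add this
    have h2 : Tendsto (fun k => Real.log (1 + 1 / (⌊x k⌋₊ : ℝ))) atTop (𝓝 0) := by
      have := ((Real.continuousAt_log one_ne_zero).tendsto).comp h1
      simpa [Function.comp_def] using this
    simpa using h2.div_const 2
  have hl : Tendsto (fun k => del (⌊x k⌋₊ : ℝ) - 1 / (2 * (⌊x k⌋₊ : ℝ))) atTop (𝓝 0) := by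
    simpa using hdm.sub hinv
  have hu : Tendsto (fun k => del (⌊x k⌋₊ : ℝ) + Real.log (1 + 1 / (⌊x k⌋₊ : ℝ)) / 2)
      atTop (𝓝 0) := by
    simpa using hdm.add hlog0
  refine tendsto_of_tendsto_of_tendsto_of_le_of_le' hl hu ?_ ?_
  · filter_upwards [hx.eventually_ge_atTop 1] with k hk using (del_bounds hk).1
  · filter_upwards [hx.eventually_ge_atTop 1] with k hk using (del_bounds hk).2
lemma phi_identity {a b K γ : ℝ} (ha : 0 < a) (hb : 0 < b) (hK : 0 < K) (hγ : 1 < γ)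
    (hab : a + b = 2 * K) :
    phi a + phi b - 2 * phi K + (2 * K) * Real.log (γ / 2) - b * Real.log (γ - 1)
      = a * Real.log (a * γ / (2 * K)) + b * Real.log (b * γ / (2 * K * (γ - 1)))
        - Real.log (a * b / K ^ 2) / 2 := by
  have hγ0 : (0:ℝ) < γ := by linarith
  have hγ1 : (0:ℝ) < γ - 1 := by linarith
  have e1 : Real.log (a * γ / (2 * K))
      = Real.log a + Real.log γ - Real.log 2 - Real.log K := by
    rw [Real.log_div (by positivity) (by positivity), Real.log_mul ha.ne' hγ0.ne',
      Real.log_mul two_ne_zero hK.ne']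
    ring
  have e2 : Real.log (b * γ / (2 * K * (γ - 1)))
      = Real.log b + Real.log γ - Real.log 2 - Real.log K - Real.log (γ - 1) := by
    rw [Real.log_div (by positivity) (by positivity), Real.log_mul hb.ne' hγ0.ne',
      Real.log_mul (by positivity) hγ1.ne', Real.log_mul two_ne_zero hK.ne']
    ring
  have e3 : Real.log (a * b / K ^ 2) = Real.log a + Real.log b - 2 * Real.log K := by
    rw [Real.log_div (by positivity) (by positivity), Real.log_mul ha.ne' hb.ne',
      Real.log_pow]
    push_cast
    ring
  have e4 : Real.log (γ / 2) = Real.log γ - Real.log 2 := Real.log_div hγ0.ne' two_ne_zero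
  rw [e1, e2, e3, e4]
  simp only [phi]
  linear_combination (Real.log K + Real.log 2 - Real.log γ - 1) * hab
lemma symbol_exp {γ r : ℝ} (hγ : 1 < γ) (k : ℕ)
    (ha : 0 < (2 * (k:ℝ) + 1 + r) / γ)
    (hb : 0 < 2 * (k:ℝ) + 2 - (2 * (k:ℝ) + 1 + r) / γ) :
    symbolC γ r k =
      Real.exp (Real.log (Real.Gamma ((2 * (k:ℝ) + 1 + r) / γ))
        + Real.log (Real.Gamma (2 * (k:ℝ) + 2 - (2 * (k:ℝ) + 1 + r) / γ))
        - 2 * Real.log (Real.Gamma ((k:ℝ) + 1))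
        + (2 * (k:ℝ) + 2) * Real.log (γ / 2)
        - (2 * (k:ℝ) + 2 - (2 * (k:ℝ) + 1 + r) / γ) * Real.log (γ - 1)) := by
  have hγ1 : (0:ℝ) < γ - 1 := by linarith
  have hγ2 : (0:ℝ) < γ / 2 := by linarith
  have hK : (0:ℝ) < (k:ℝ) + 1 := by positivity
  set A : ℝ := (2 * (k:ℝ) + 1 + r) / γ
  set B : ℝ := 2 * (k:ℝ) + 2 - (2 * (k:ℝ) + 1 + r) / γ
  have hGA : 0 < Real.Gamma A := Real.Gamma_pos_of_pos ha
  have hGB : 0 < Real.Gamma B := Real.Gamma_pos_of_pos hb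
  have hGK : 0 < Real.Gamma ((k:ℝ) + 1) := Real.Gamma_pos_of_pos hK
  have hpow : Real.exp ((2 * (k:ℝ) + 2) * Real.log (γ / 2)) = (γ / 2) ^ (2 * k + 2) := by
    have hp : (0:ℝ) < (γ / 2) ^ (2 * k + 2) := by positivity
    rw [← Real.exp_log hp, Real.log_pow]
    push_cast
    ring_nf
  have hrpow : Real.exp (-(B * Real.log (γ - 1))) = (γ - 1) ^ (-B) := by
    rw [Real.rpow_def_of_pos hγ1]
    ring_nf
  rw [show Real.log (Real.Gamma A) + Real.log (Real.Gamma B)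
        - 2 * Real.log (Real.Gamma ((k:ℝ) + 1)) + (2 * (k:ℝ) + 2) * Real.log (γ / 2)
        - B * Real.log (γ - 1)
      = (((Real.log (Real.Gamma A) + Real.log (Real.Gamma B))
          + ((2 * (k:ℝ) + 2) * Real.log (γ / 2)) + (-(B * Real.log (γ - 1))))
        - (Real.log (Real.Gamma ((k:ℝ) + 1)) + Real.log (Real.Gamma ((k:ℝ) + 1)))) from by ring]
  rw [Real.exp_sub, Real.exp_add, Real.exp_add, Real.exp_add, Real.exp_add,
    Real.exp_log hGA, Real.exp_log hGB, Real.exp_log hGK, hpow, hrpow]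
  simp only [symbolC]
  set x := Real.Gamma A
  set y := Real.Gamma B
  set z := Real.Gamma ((k:ℝ) + 1)
  set p := (γ / 2) ^ (2 * k + 2)
  set q := (γ - 1) ^ (-B)
  rw [show z * z = z ^ 2 from (sq z).symm]
  field_simp

/-- `a`-sequence. -/
def aF (γ r : ℝ) (k : ℕ) : ℝ := (2 * (k:ℝ) + 1 + r) / γ
/-- `b`-sequence. -/
def bF (γ r : ℝ) (k : ℕ) : ℝ := 2 * (k:ℝ) + 2 - aF γ r k

section main
variable {γ r : ℝ} (hγ : 1 < γ)

lemma symbol_tendsto (hγ : 1 < γ) (r : ℝ) :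
    Tendsto (fun k : ℕ => symbolC γ r k) atTop (𝓝 (γ / (2 * Real.sqrt (γ - 1)))) := by
  have hγ0 : (0:ℝ) < γ := by linarith
  have hγ1 : (0:ℝ) < γ - 1 := by linarith
  have hsq : 0 < Real.sqrt (γ - 1) := Real.sqrt_pos.2 hγ1
  set T : ℝ := γ / (2 * Real.sqrt (γ - 1)) with hTdef
  have hTpos : 0 < T := by positivity
  have hcast : Tendsto (fun k : ℕ => (k:ℝ)) atTop atTop := tendsto_natCast_atTop_atTop
  have h2K : Tendsto (fun k : ℕ => 2 * (k:ℝ) + 2) atTop atTop :=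
    tendsto_atTop_add_const_right _ 2 (hcast.const_mul_atTop two_pos)
  have hKtop : Tendsto (fun k : ℕ => (k:ℝ) + 1) atTop atTop :=
    tendsto_atTop_add_const_right _ 1 hcast
  have ha_top : Tendsto (aF γ r) atTop atTop := by
    apply Tendsto.atTop_div_const hγ0
    exact tendsto_atTop_add_const_right _ (1 + r)
      (hcast.const_mul_atTop two_pos) |>.congr (fun k => by ring)
  have hb_top : Tendsto (bF γ r) atTop atTop := by
    have h1 : Tendsto (fun k : ℕ => ((2 * (k:ℝ) + 2) * (γ - 1) + (1 - r)) / γ) atTop atTop :=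
      Tendsto.atTop_div_const hγ0
        (tendsto_atTop_add_const_right _ (1 - r) (h2K.atTop_mul_const hγ1))
    apply h1.congr
    intro k
    rw [bF, aF]
    field_simp
    ring
  -- ratios
  have hw0 : Tendsto (fun k : ℕ => (r - 1) / (2 * (k:ℝ) + 2)) atTop (𝓝 0) :=
    tendsto_const_nhds.div_atTop h2K
  have hu1 : Tendsto (fun k : ℕ => 1 + (r - 1) / (2 * (k:ℝ) + 2)) atTop (𝓝 1) := by
    simpa using (tendsto_const_nhds (x := (1:ℝ)) (f := atTop (α := ℕ))).add hw0
  have hratio_a : Tendsto (fun k : ℕ => aF γ r k / (2 * (k:ℝ) + 2)) atTop (𝓝 (1 / γ)) := by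
    have h1 := hu1.div_const γ
    apply h1.congr
    intro k
    have h2 : (0:ℝ) < 2 * (k:ℝ) + 2 := by positivity
    rw [aF]
    field_simp
    ring
  have hratio_b : Tendsto (fun k : ℕ => bF γ r k / (2 * (k:ℝ) + 2)) atTop (𝓝 ((γ - 1) / γ)) := by
    have h1 := (tendsto_const_nhds (x := (1:ℝ)) (f := atTop (α := ℕ))).sub hratio_a
    have h2 : (1:ℝ) - 1 / γ = (γ - 1) / γ := by field_simp
    rw [← h2]
    apply h1.congr
    intro k
    have h3 : (2 * (k:ℝ) + 2) ≠ 0 := by positivity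
    rw [bF]
    field_simp
  -- the two log-limits
  have hmulA : Tendsto
      (fun k : ℕ => aF γ r k * Real.log (1 + (r - 1) / (2 * (k:ℝ) + 2))) atTop
      (𝓝 (1 / γ * (r - 1))) := by
    have h1 : Tendsto (fun k : ℕ =>
        (2 * (k:ℝ) + 2) * Real.log (1 + (r - 1) / (2 * (k:ℝ) + 2))) atTop (𝓝 (r - 1)) :=
      (Real.tendsto_mul_log_one_add_div_atTop (r - 1)).comp h2K
    have h2 := hratio_a.mul h1
    apply h2.congr
    intro k
    have h3 : (2 * (k:ℝ) + 2) ≠ 0 := by positivity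
    field_simp
  have hmulB : Tendsto
      (fun k : ℕ => bF γ r k * Real.log (1 + (-(r - 1) / (γ - 1)) / (2 * (k:ℝ) + 2))) atTop
      (𝓝 ((γ - 1) / γ * (-(r - 1) / (γ - 1)))) := by
    have h1 : Tendsto (fun k : ℕ =>
        (2 * (k:ℝ) + 2) * Real.log (1 + (-(r - 1) / (γ - 1)) / (2 * (k:ℝ) + 2))) atTop
        (𝓝 (-(r - 1) / (γ - 1))) :=
      (Real.tendsto_mul_log_one_add_div_atTop (-(r - 1) / (γ - 1))).comp h2K
    have h2 := hratio_b.mul h1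
    apply h2.congr
    intro k
    have h3 : (2 * (k:ℝ) + 2) ≠ 0 := by positivity
    field_simp
  -- quotient limit
  have hQ : Tendsto (fun k : ℕ => aF γ r k * bF γ r k / ((k:ℝ) + 1) ^ 2) atTop
      (𝓝 (4 * (1 / γ) * ((γ - 1) / γ))) := by
    have h1 := ((hratio_a.mul hratio_b).const_mul (4:ℝ))
    have h2 : (4:ℝ) * (1 / γ * ((γ - 1) / γ)) = 4 * (1 / γ) * ((γ - 1) / γ) := by ring
    rw [h2] at h1
    apply h1.congr
    intro k
    have h3 : ((k:ℝ) + 1) ≠ 0 := by positivity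
    have h4 : (2 * (k:ℝ) + 2) ≠ 0 := by positivity
    field_simp
    ring
  have hQpos : (0:ℝ) < 4 * (1 / γ) * ((γ - 1) / γ) := by positivity
  have hlogQ : Tendsto (fun k : ℕ => Real.log (aF γ r k * bF γ r k / ((k:ℝ) + 1) ^ 2)) atTop
      (𝓝 (Real.log (4 * (1 / γ) * ((γ - 1) / γ)))) :=
    ((Real.continuousAt_log hQpos.ne').tendsto).comp hQ
  -- value of the limit
  have hlogT : 1 / γ * (r - 1) + (γ - 1) / γ * (-(r - 1) / (γ - 1))
      - Real.log (4 * (1 / γ) * ((γ - 1) / γ)) / 2 = Real.log T := by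
    have hc : 1 / γ * (r - 1) + (γ - 1) / γ * (-(r - 1) / (γ - 1)) = 0 := by
      field_simp
      ring
    have harg : 4 * (1 / γ) * ((γ - 1) / γ) = 4 * (γ - 1) / γ ^ 2 := by
      field_simp
    have h4 : Real.log (4 * (γ - 1) / γ ^ 2)
        = 2 * Real.log 2 + Real.log (γ - 1) - 2 * Real.log γ := by
      rw [Real.log_div (by positivity) (by positivity),
        Real.log_mul (by norm_num) hγ1.ne', Real.log_pow,
        show (4:ℝ) = 2 ^ 2 by norm_num, Real.log_pow]
      push_cast
      ring
    have hT2 : Real.log T = Real.log γ - Real.log 2 - Real.log (γ - 1) / 2 := by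
      rw [hTdef, Real.log_div hγ0.ne' (by positivity),
        Real.log_mul two_ne_zero hsq.ne', Real.log_sqrt hγ1.le]
      ring
    rw [hc, harg, h4, hT2]
    ring
  -- the elementary part
  have hE : Tendsto (fun k : ℕ =>
      aF γ r k * Real.log (1 + (r - 1) / (2 * (k:ℝ) + 2))
      + bF γ r k * Real.log (1 + (-(r - 1) / (γ - 1)) / (2 * (k:ℝ) + 2))
      - Real.log (aF γ r k * bF γ r k / ((k:ℝ) + 1) ^ 2) / 2) atTop (𝓝 (Real.log T)) := by
    rw [← hlogT]
    exact (hmulA.add hmulB).sub (hlogQ.div_const 2)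
  -- full exponent
  have hF : Tendsto (fun k : ℕ =>
      del (aF γ r k) + del (bF γ r k) - 2 * del ((k:ℝ) + 1) +
      (aF γ r k * Real.log (1 + (r - 1) / (2 * (k:ℝ) + 2))
      + bF γ r k * Real.log (1 + (-(r - 1) / (γ - 1)) / (2 * (k:ℝ) + 2))
      - Real.log (aF γ r k * bF γ r k / ((k:ℝ) + 1) ^ 2) / 2)) atTop (𝓝 (Real.log T)) := by
    have h1 := ((tendsto_del ha_top).add (tendsto_del hb_top)).sub
      ((tendsto_del hKtop).const_mul (2:ℝ))
    have h2 := h1.add hE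
    simpa using h2
  have hexp : Tendsto (fun k : ℕ => Real.exp
      (del (aF γ r k) + del (bF γ r k) - 2 * del ((k:ℝ) + 1) +
      (aF γ r k * Real.log (1 + (r - 1) / (2 * (k:ℝ) + 2))
      + bF γ r k * Real.log (1 + (-(r - 1) / (γ - 1)) / (2 * (k:ℝ) + 2))
      - Real.log (aF γ r k * bF γ r k / ((k:ℝ) + 1) ^ 2) / 2))) atTop (𝓝 T) := by
    have h1 := (Real.continuous_exp.tendsto (Real.log T)).comp hF
    rwa [Real.exp_log hTpos] at h1
  -- eventual equality
  apply hexp.congr'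
  filter_upwards [ha_top.eventually_gt_atTop 0, hb_top.eventually_gt_atTop 0] with k hak hbk
  have hKk : (0:ℝ) < (k:ℝ) + 1 := by positivity
  have hab : aF γ r k + bF γ r k = 2 * ((k:ℝ) + 1) := by rw [bF]; ring
  have hu : 1 + (r - 1) / (2 * (k:ℝ) + 2) = aF γ r k * γ / (2 * ((k:ℝ) + 1)) := by
    rw [aF]
    field_simp
    ring
  have hv : 1 + (-(r - 1) / (γ - 1)) / (2 * (k:ℝ) + 2)
      = bF γ r k * γ / (2 * ((k:ℝ) + 1) * (γ - 1)) := by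
    rw [bF, aF]
    field_simp
    ring
  have hid := phi_identity hak hbk hKk hγ hab
  have hse := symbol_exp hγ k hak hbk
  rw [hse]
  congr 1
  rw [hu, hv, ← hid]
  simp only [del, aF, bF]
  ring
end main
end HFAux

/-- For every `γ > 1` and `r ∈ ℝ`, `C_{μ_r}(γ,k) → γ/(2√(γ−1))` as
`k → ∞`; consequently, for any sequence `N k` of norms with `N k = ‖L_k‖ = √(C_{μ_r}(γ,k))`
whenever `r ∈ I_k = (−2k−1, (2k+2)(γ−1)+1)`, one has
`limsup_k N k = lim_k N k = √(γ/(2√(γ−1)))`, independent of `r`. -/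
theorem high_frequency_limit_norm (γ r : ℝ) (hγ : 1 < γ) :
    Tendsto (fun k : ℕ => symbolC γ r k) atTop (nhds (γ / (2 * Real.sqrt (γ - 1)))) ∧
    ∀ N : ℕ → ℝ,
      (∀ k : ℕ, r ∈ Set.Ioo (-(2 * (k : ℝ)) - 1) ((2 * (k : ℝ) + 2) * (γ - 1) + 1) →
        N k = Real.sqrt (symbolC γ r k)) →
      Tendsto N atTop (nhds (Real.sqrt (γ / (2 * Real.sqrt (γ - 1))))) ∧
      limsup N atTop = Real.sqrt (γ / (2 * Real.sqrt (γ - 1))) := by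
  have hγ1 : (0:ℝ) < γ - 1 := by linarith
  have hmain := HFAux.symbol_tendsto hγ r
  refine ⟨hmain, fun N hN => ?_⟩
  have hlim : Tendsto (fun k : ℕ => Real.sqrt (symbolC γ r k)) atTop
      (nhds (Real.sqrt (γ / (2 * Real.sqrt (γ - 1))))) :=
    (Real.continuous_sqrt.tendsto _).comp hmain
  have hcast : Tendsto (fun k : ℕ => (k:ℝ)) atTop atTop := tendsto_natCast_atTop_atTop
  have hL : Tendsto (fun k : ℕ => -(2 * (k:ℝ)) - 1) atTop atBot := by
    have h1 : Tendsto (fun k : ℕ => (-2 : ℝ) * (k:ℝ)) atTop atBot :=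
      hcast.const_mul_atTop_of_neg (by norm_num)
    have h2 := tendsto_atBot_add_const_right atTop (-1 : ℝ) h1
    apply h2.congr
    intro k
    ring
  have hR : Tendsto (fun k : ℕ => (2 * (k:ℝ) + 2) * (γ - 1) + 1) atTop atTop := by
    apply tendsto_atTop_add_const_right
    exact (tendsto_atTop_add_const_right _ 2 (hcast.const_mul_atTop two_pos)).atTop_mul_const hγ1
  have hev : N =ᶠ[atTop] fun k => Real.sqrt (symbolC γ r k) := by
    filter_upwards [hL.eventually_lt_atBot r, hR.eventually_gt_atTop r] with k hk1 hk2
    exact hN k ⟨hk1, hk2⟩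
  have hNlim : Tendsto N atTop (nhds (Real.sqrt (γ / (2 * Real.sqrt (γ - 1))))) :=
    hlim.congr' hev.symm
  exact ⟨hNlim, hNlim.limsup_eq⟩
end
end

section
/- Let C > 0 be real, let k ≥ 0 be an integer and let ξ ∈ ℝ. Then ∫_{−∞}^{∞} e^{2πisξ} / (s + iC)^{k+2} ds equals 0 when ξ ≥ 0, and equals −(2πi)^{k+2}/(k+1)! · ξ^{k+1} e^{2πξC} when ξ < 0. -/
open MeasureTheory Set Filter Real Complex FourierTransform Topology

lemma aux_integrableOn {z : ℂ} (hz : 0 < z.re) (n : ℕ) :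
    IntegrableOn (fun t : ℝ => (t:ℂ)^n * Complex.exp (-(z * t))) (Ioi 0) := by
  have h := integrableOn_rpow_mul_exp_neg_mul_rpow (p := 1) (s := (n:ℝ))
    (neg_one_lt_zero.trans_le (Nat.cast_nonneg n)) zero_lt_one hz
  refine Integrable.mono' h ?_ ?_
  · exact (Continuous.mul (by fun_prop) (by fun_prop)).aestronglyMeasurable
  · refine (ae_restrict_iff' measurableSet_Ioi).2 (ae_of_all _ fun t ht => ?_)
    rw [mem_Ioi] at ht
    rw [norm_mul, norm_pow]; simp only [Complex.norm_exp]
    have : (-(z * t)).re = -(z.re * t) := by simp [Complex.mul_re]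
    rw [this, Real.rpow_one, Complex.norm_real, Real.norm_eq_abs, abs_of_pos ht, ← Real.rpow_natCast t n, neg_mul]

lemma aux_integral {z : ℂ} (hz : 0 < z.re) : ∀ n : ℕ,
    ∫ t in Ioi (0:ℝ), (t:ℂ)^n * Complex.exp (-(z * t)) = n.factorial / z^(n+1) := by
  have hz0 : z ≠ 0 := fun h => by simp [h] at hz
  have hexp : ∀ x : ℝ, HasDerivAt (fun t : ℝ => Complex.exp (-(z * t)))
      (-z * Complex.exp (-(z * x))) x := by
    intro x
    have h1 : HasDerivAt (fun w : ℂ => Complex.exp (-(z * w))) (-z * Complex.exp (-(z * x))) x := by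
      simpa [mul_comm] using (((hasDerivAt_id (x:ℂ)).const_mul z).neg).cexp
    exact h1.comp_ofReal
  have htend : ∀ m : ℕ, Tendsto (fun t : ℝ => (t:ℂ)^m * Complex.exp (-(z * t))) atTop (𝓝 0) := by
    intro m
    apply squeeze_zero_norm' (a := fun t : ℝ => t ^ (m:ℝ) * Real.exp (-z.re * t))
    · filter_upwards [Ioi_mem_atTop (0:ℝ)] with t ht
      rw [mem_Ioi] at ht
      rw [norm_mul, norm_pow]; simp only [Complex.norm_exp]
      have : (-(z * t)).re = -(z.re * t) := by simp [Complex.mul_re]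
      rw [this, Complex.norm_real, Real.norm_eq_abs, abs_of_pos ht, ← Real.rpow_natCast t m, neg_mul]
    · exact tendsto_rpow_mul_exp_neg_mul_atTop_nhds_zero _ _ hz
  intro n
  induction n with
  | zero =>
      have hderiv : ∀ x ∈ Ici (0:ℝ), HasDerivAt (fun t : ℝ => -Complex.exp (-(z * t)) / z)
          ((x:ℂ)^0 * Complex.exp (-(z * x))) x := by
        intro x _
        have := ((hexp x).neg).div_const z
        refine this.congr_deriv ?_
        field_simp
      have htd : Tendsto (fun t : ℝ => -Complex.exp (-(z * t)) / z) atTop (𝓝 (0:ℂ)) := by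
        have := (htend 0).neg.div_const z
        simpa using this.congr (fun t => by ring)
      have h := integral_Ioi_of_hasDerivAt_of_tendsto' hderiv (aux_integrableOn hz 0) htd
      rw [h]; field_simp; simp
  | succ n ih =>
      set f' : ℝ → ℂ := fun x => (x:ℂ)^(n+1) * Complex.exp (-(z * x)) -
        ((n+1 : ℂ)/z) * ((x:ℂ)^n * Complex.exp (-(z * x))) with hf'
      have hderiv : ∀ x ∈ Ici (0:ℝ),
          HasDerivAt (fun t : ℝ => -((t:ℂ)^(n+1) * Complex.exp (-(z * t))) / z) (f' x) x := by
        intro x _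
        have hpow : HasDerivAt (fun t : ℝ => (t:ℂ)^(n+1)) ((n+1 : ℂ) * (x:ℂ)^n) x := by
          have := (hasDerivAt_pow (n+1) (x:ℂ)).comp_ofReal
          simpa using this
        have := ((hpow.mul (hexp x)).neg).div_const z
        refine this.congr_deriv ?_
        simp only [hf']
        field_simp
        ring
      have hint : IntegrableOn f' (Ioi (0:ℝ)) :=
        (aux_integrableOn hz (n+1)).sub ((aux_integrableOn hz n).const_mul _)
      have htd : Tendsto (fun t : ℝ => -((t:ℂ)^(n+1) * Complex.exp (-(z * t))) / z)
          atTop (𝓝 (0:ℂ)) := by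
        have := ((htend (n+1)).neg).div_const z
        simpa using this.congr (fun t => by ring)
      have h := integral_Ioi_of_hasDerivAt_of_tendsto' hderiv hint htd
      · rw [hf'] at h
        rw [integral_sub (aux_integrableOn hz (n+1)) ((aux_integrableOn hz n).const_mul _),
          MeasureTheory.integral_const_mul, ih] at h
        norm_num at h
        rw [eq_of_sub_eq_zero h, Nat.factorial_succ]
        push_cast
        rw [div_mul_div_comm, ← pow_succ']

/-- For real `C > 0`, integer `k ≥ 0` and `ξ ∈ ℝ`, the inverse Fourier
integral `∫_{−∞}^∞ e^{2πisξ}/(s+iC)^{k+2} ds` equals `0` for `ξ ≥ 0` and equals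
`−(2πi)^{k+2}/(k+1)! · ξ^{k+1} e^{2πξC}` for `ξ < 0`. -/
theorem inverse_fourier_of_inv_pow (C : ℝ) (hC : 0 < C) (k : ℕ) (ξ : ℝ) :
    (0 ≤ ξ →
      ∫ s : ℝ, Complex.exp (2 * (Real.pi : ℂ) * Complex.I * (s : ℂ) * (ξ : ℂ)) /
        ((s : ℂ) + Complex.I * (C : ℂ)) ^ (k + 2) = 0) ∧
    (ξ < 0 →
      ∫ s : ℝ, Complex.exp (2 * (Real.pi : ℂ) * Complex.I * (s : ℂ) * (ξ : ℂ)) /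
        ((s : ℂ) + Complex.I * (C : ℂ)) ^ (k + 2) =
      -((2 * (Real.pi : ℂ) * Complex.I) ^ (k + 2) / ((k + 1).factorial : ℂ) *
        (ξ : ℂ) ^ (k + 1) *
        Complex.exp (2 * (Real.pi : ℂ) * (ξ : ℂ) * (C : ℂ)))) := by
  have hfac : ((k+1).factorial : ℂ) ≠ 0 := Nat.cast_ne_zero.mpr (k+1).factorial_ne_zero
  have hiC : ∀ s : ℝ, (s:ℂ) + Complex.I * C ≠ 0 := by
    intro s h
    have := congrArg Complex.im h
    simp at this
    linarith
  set c : ℂ := 2 * (Real.pi : ℂ) * Complex.I with hc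
  have hcne : c ≠ 0 := by
    simp [hc, Real.pi_ne_zero, Complex.I_ne_zero, Complex.ofReal_ne_zero]
  set B : ℂ := -(c ^ (k+2) / ((k+1).factorial : ℂ)) with hB
  set A : ℂ := B * (-1)^(k+1) with hA
  set g : ℝ → ℂ := fun x => B * ((min x 0 : ℝ) : ℂ)^(k+1) *
      Complex.exp (2 * (Real.pi : ℂ) * ((min x 0 : ℝ) : ℂ) * C) with hgdef
  have hgcont : Continuous g := by
    apply Continuous.mul
    · apply Continuous.mul continuous_const
      exact (Complex.continuous_ofReal.comp (continuous_id.min continuous_const)).pow _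
    · exact Complex.continuous_exp.comp (by fun_prop)
  have hg0 : ∀ x : ℝ, 0 ≤ x → g x = 0 := by
    intro x hx
    simp [hgdef, min_eq_right hx]
  have hz0re : (0:ℝ) < (((2*Real.pi*C : ℝ) : ℂ)).re := by
    rw [Complex.ofReal_re]; positivity
  have hgneg : ∀ x : ℝ, 0 < x → g (-x) =
      A * ((x:ℂ)^(k+1) * Complex.exp (-(((2*Real.pi*C : ℝ) : ℂ) * x))) := by
    intro x hx
    have hmin : min (-x) 0 = -x := min_eq_left (by linarith)
    simp only [hgdef, hA, hmin]
    push_cast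
    rw [show ((2:ℂ) * (Real.pi:ℂ) * (-(x:ℂ)) * C) = -((2*(Real.pi:ℂ)*C) * x) by ring]
    ring
  -- Integrability of g
  have hgint : Integrable g := by
    have A1 : MeasurableEmbedding (fun x : ℝ => -x) :=
      (Homeomorph.neg ℝ).isClosedEmbedding.measurableEmbedding
    have hIoi : IntegrableOn (fun x : ℝ => g (-x)) (Ioi 0) := by
      have h0 : IntegrableOn
          (fun x : ℝ => A * ((x:ℂ)^(k+1) * Complex.exp (-(((2*Real.pi*C : ℝ) : ℂ) * x))))
          (Ioi 0) := (aux_integrableOn hz0re (k+1)).const_mul A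
      refine h0.congr_fun ?_ measurableSet_Ioi
      intro x hx
      exact (hgneg x hx).symm
    have hIic : IntegrableOn (fun x : ℝ => g (-x)) (Iic 0) := by
      refine ((integrableOn_congr_fun ?_ measurableSet_Iic).2 (integrableOn_zero))
      intro x hx
      exact (hg0 (-x) (by simpa using hx)) ▸ rfl
    have hu := hIic.union hIoi
    rw [Iic_union_Ioi, integrableOn_univ] at hu
    rw [← Measure.map_neg_eq_self (volume : Measure ℝ)]
    exact (A1.integrable_map_iff).2 hu
  -- The Fourier transform of g
  have key : ∀ s : ℝ, 𝓕 g s = (((s:ℂ) + Complex.I * C) ^ (k+2))⁻¹ := by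
    intro s
    set zs : ℂ := 2*(Real.pi:ℂ)*C - 2*(Real.pi:ℂ)*s*Complex.I with hzs
    have hzsre : (0:ℝ) < zs.re := by
      simp [hzs, Complex.sub_re, Complex.mul_re, Complex.I_re, Complex.I_im]
      positivity
    have hzsne : zs ≠ 0 := fun h => by rw [h] at hzsre; simp at hzsre
    have hzs_eq : zs = -c * ((s:ℂ) + Complex.I * C) := by
      simp only [hzs, hc]
      linear_combination (2*(Real.pi:ℂ)*C) * Complex.I_sq
    rw [Real.fourier_real_eq_integral_exp_smul]
    simp only [smul_eq_mul]
    rw [← setIntegral_eq_integral_of_forall_compl_eq_zero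
      (s := Iio (0:ℝ)) (fun v hv => by rw [hg0 v (by simpa using hv), mul_zero])]
    rw [← integral_Iic_eq_integral_Iio, show (0:ℝ) = -0 by norm_num, ← integral_comp_neg_Ioi]
    have hcong : ∀ t ∈ Ioi (0:ℝ),
        Complex.exp (((-2 * Real.pi * (-t) * s : ℝ) : ℂ) * Complex.I) * g (-t)
        = A * ((t:ℂ)^(k+1) * Complex.exp (-(zs * t))) := by
      intro t ht
      rw [mem_Ioi] at ht
      rw [hgneg t ht]
      rw [show -(zs * t) = ((-2 * Real.pi * (-t) * s : ℝ) : ℂ) * Complex.I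
          + -(((2*Real.pi*C : ℝ) : ℂ) * t) by push_cast [hzs]; ring, Complex.exp_add]
      ring
    rw [setIntegral_congr_fun measurableSet_Ioi hcong, MeasureTheory.integral_const_mul,
      aux_integral hzsre (k+1)]
    have h1 : A * ((k+1).factorial : ℂ) = (-c)^(k+2) := by
      rw [hA, hB, neg_pow c]
      field_simp
      rw [pow_succ (-1 : ℂ) (k+1)]
      ring
    rw [hzs_eq, mul_pow]
    rw [div_eq_mul_inv, ← mul_assoc, h1, mul_inv]
    rw [← mul_assoc, mul_inv_cancel₀ (pow_ne_zero _ (neg_ne_zero.2 hcne)), one_mul]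
  -- Integrability of the Fourier transform
  have hint2 : Integrable (fun s : ℝ => (((s:ℂ) + Complex.I * C) ^ (k+2))⁻¹) := by
    have hmaj := (integrable_inv_one_add_sq).const_mul ((1+C⁻¹^2)/C^k)
    refine hmaj.mono' ?_ (ae_of_all _ fun s => ?_)
    · exact ((Continuous.pow (by fun_prop) _).inv₀
        (fun s => pow_ne_zero _ (hiC s))).aestronglyMeasurable
    · set r : ℝ := ‖(s:ℂ) + Complex.I * C‖ with hr
      have hrC : C ≤ r := by
        have h := Complex.abs_im_le_norm ((s:ℂ) + Complex.I * C)
        simpa [abs_of_pos hC] using h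
      have hrpos : 0 < r := lt_of_lt_of_le hC hrC
      have hr2 : r^2 = s^2 + C^2 := by
        rw [hr, Complex.sq_norm]
        simp [Complex.normSq_apply]
        ring
      have e1 : ((1+C⁻¹^2)/C^k) * (1+s^2)⁻¹ = (1+C⁻¹^2)/(C^k*(1+s^2)) := by
        rw [division_def, division_def, mul_inv]
        ring
      rw [norm_inv, norm_pow, ← hr, e1, inv_eq_one_div,
        div_le_div_iff₀ (by positivity) (by positivity), one_mul]
      have hrk : C^k ≤ r^k := pow_le_pow_left₀ hC.le hrC k
      have hsplit : r^(k+2) = r^2 * r^k := by ring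
      rw [hsplit, hr2]
      have h4 : C⁻¹^2 * C^2 = 1 := by field_simp
      have h5 : (1+s^2) ≤ (1+C⁻¹^2)*(s^2+C^2) := by
        nlinarith [sq_nonneg s, sq_nonneg (C⁻¹*s)]
      have h6 : (1+s^2)*C^k ≤ (1+s^2)*r^k :=
        mul_le_mul_of_nonneg_left hrk (by positivity)
      have h7 : (1+s^2)*r^k ≤ ((1+C⁻¹^2)*(s^2+C^2))*r^k :=
        mul_le_mul_of_nonneg_right h5 (pow_nonneg hrpos.le k)
      nlinarith [h6, h7]
  -- Fourier inversion
  have hFg : 𝓕 g = fun s : ℝ => (((s:ℂ) + Complex.I * C) ^ (k+2))⁻¹ := funext key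
  have hFint : Integrable (𝓕 g) := by rw [hFg]; exact hint2
  have hinv := hgcont.fourierInv_fourier_eq hgint hFint
  rw [hFg] at hinv
  have htarget : (∫ s : ℝ, Complex.exp (2 * (Real.pi : ℂ) * Complex.I * (s : ℂ) * (ξ : ℂ)) /
      ((s : ℂ) + Complex.I * (C : ℂ)) ^ (k + 2)) = g ξ := by
    rw [← congrFun hinv ξ, Real.fourierInv_eq_fourier_neg,
      Real.fourier_real_eq_integral_exp_smul]
    apply integral_congr_ae
    apply ae_of_all
    intro v
    simp only [smul_eq_mul]
    rw [show (((-2) * Real.pi * v * -ξ : ℝ) : ℂ) * Complex.I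
      = 2 * (Real.pi : ℂ) * Complex.I * (v : ℂ) * (ξ : ℂ) by push_cast; ring]
    rw [div_eq_mul_inv]
  constructor
  · intro hξ
    rw [htarget, hg0 ξ hξ]
  · intro hξ
    rw [htarget]
    simp only [hgdef, min_eq_left hξ.le]
    ring
end

section
/- For every real a > 0, one has ∑_{j=1}^{∞} 2j / (a+j)³ < 1/a; equivalently, ∑_{j=0}^{∞} 2aj / (a+j)³ < 1. -/
set_option maxHeartbeats 1000000


/-- For every real `a > 0`:
`∑_{j=1}^∞ 2j/(a+j)³ < 1/a`, equivalently `∑_{j=0}^∞ 2aj/(a+j)³ < 1`. -/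
theorem sum_two_j_div_cube_lt (a : ℝ) (ha : 0 < a) :
    (Summable fun j : ℕ => 2 * ((j : ℝ) + 1) / (a + ((j : ℝ) + 1)) ^ 3) ∧
    (∑' j : ℕ, 2 * ((j : ℝ) + 1) / (a + ((j : ℝ) + 1)) ^ 3) < 1 / a ∧
    (∑' j : ℕ, 2 * a * (j : ℝ) / (a + (j : ℝ)) ^ 3) < 1 := by
  set F : ℕ → ℝ := fun j => 2 * ((j : ℝ) + 1) / (a + ((j : ℝ) + 1)) ^ 3 with hFdef
  set G : ℕ → ℝ := fun n =>
    (2 * (a + (n : ℝ) + 1) ^ 3 + (1 - a) * (a + (n : ℝ) + 1) ^ 2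
      + (7 / 20 - a) * (a + (n : ℝ) + 1) - a / 2) / (a + (n : ℝ) + 1) ^ 4 with hGdef
  have hn0 : ∀ n : ℕ, (0 : ℝ) ≤ (n : ℝ) := fun n => Nat.cast_nonneg n
  have hGpos : ∀ n : ℕ, 0 ≤ G n := by
    intro n
    have hb := hn0 n
    have ha' := ha.le
    simp only [hGdef]
    apply div_nonneg _ (by positivity)
    nlinarith [mul_nonneg ha' hb, pow_nonneg hb 2, pow_nonneg hb 3,
      mul_nonneg ha' (pow_nonneg hb 2), mul_nonneg (mul_nonneg ha' ha') hb,
      pow_nonneg ha' 2, pow_nonneg ha' 3]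
  have hFnonneg : ∀ n : ℕ, 0 ≤ F n := by
    intro n
    apply div_nonneg (by positivity) (by positivity)
  have key : ∀ n : ℕ, F n ≤ G n - G (n + 1) := by
    intro n
    have hb := hn0 n
    have ha' := ha.le
    have hd1 : (a + (n : ℝ) + 1) ≠ 0 := by positivity
    have hd2 : (a + ((n : ℝ) + 1) + 1) ≠ 0 := by positivity
    have hd3 : (a + ((n : ℝ) + 1)) ≠ 0 := by positivity
    have hd4 : (a + (n : ℝ) + 2) ≠ 0 := by positivity
    have hQ : G n - G (n + 1) - F n =
        (9 / 10 + 33 / 20 * (n : ℝ) + (n : ℝ) ^ 2 + 3 / 10 * (n : ℝ) ^ 3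
          + 1 / 20 * (n : ℝ) ^ 4 + 3 / 20 * a + a * (n : ℝ) + 9 / 10 * a * (n : ℝ) ^ 2
          + 1 / 5 * a * (n : ℝ) ^ 3 + 9 / 10 * a ^ 2 * (n : ℝ) + 3 / 10 * a ^ 2 * (n : ℝ) ^ 2
          + 3 / 10 * a ^ 3 + 1 / 5 * a ^ 3 * (n : ℝ) + 1 / 20 * a ^ 4)
          / ((a + (n : ℝ) + 1) ^ 4 * (a + (n : ℝ) + 2) ^ 4) := by
      simp only [hGdef, hFdef]
      push_cast
      field_simp
      ring
    have hnum : 0 ≤ 9 / 10 + 33 / 20 * (n : ℝ) + (n : ℝ) ^ 2 + 3 / 10 * (n : ℝ) ^ 3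
          + 1 / 20 * (n : ℝ) ^ 4 + 3 / 20 * a + a * (n : ℝ) + 9 / 10 * a * (n : ℝ) ^ 2
          + 1 / 5 * a * (n : ℝ) ^ 3 + 9 / 10 * a ^ 2 * (n : ℝ) + 3 / 10 * a ^ 2 * (n : ℝ) ^ 2
          + 3 / 10 * a ^ 3 + 1 / 5 * a ^ 3 * (n : ℝ) + 1 / 20 * a ^ 4 := by
      have h1 : 0 ≤ a * (n : ℝ) := mul_nonneg ha' hb
      have h2 : 0 ≤ a * (n : ℝ) ^ 2 := mul_nonneg ha' (pow_nonneg hb 2)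
      have h3 : 0 ≤ a * (n : ℝ) ^ 3 := mul_nonneg ha' (pow_nonneg hb 3)
      have h4 : 0 ≤ a ^ 2 * (n : ℝ) := mul_nonneg (pow_nonneg ha' 2) hb
      have h5 : 0 ≤ a ^ 2 * (n : ℝ) ^ 2 := mul_nonneg (pow_nonneg ha' 2) (pow_nonneg hb 2)
      have h6 : 0 ≤ a ^ 3 * (n : ℝ) := mul_nonneg (pow_nonneg ha' 3) hb
      have h7 : 0 ≤ (n : ℝ) ^ 2 := pow_nonneg hb 2
      have h8 : 0 ≤ (n : ℝ) ^ 3 := pow_nonneg hb 3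
      have h9 : 0 ≤ (n : ℝ) ^ 4 := pow_nonneg hb 4
      have h10 : 0 ≤ a ^ 3 := pow_nonneg ha' 3
      have h11 : 0 ≤ a ^ 4 := pow_nonneg ha' 4
      linarith
    have hden : (0 : ℝ) < (a + (n : ℝ) + 1) ^ 4 * (a + (n : ℝ) + 2) ^ 4 := by positivity
    have hfrac := div_nonneg hnum hden.le
    linarith
  have partialsum : ∀ N : ℕ, ∑ j ∈ Finset.range N, F j ≤ G 0 - G N := by
    intro N
    induction N with
    | zero => simp
    | succ m ih =>
      rw [Finset.sum_range_succ]
      have := key m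
      linarith
  have bound : ∀ N : ℕ, ∑ j ∈ Finset.range N, F j ≤ G 0 := fun N =>
    (partialsum N).trans (by linarith [hGpos N])
  have hsum : Summable F := summable_of_sum_range_le hFnonneg bound
  have htsum : ∑' j, F j ≤ G 0 := Summable.tsum_le_of_sum_range_le hsum bound
  have hG0lt : G 0 < 1 / a := by
    have hG0 : 1 / a - G 0 = (1 + 13 / 20 * a + 3 / 20 * a ^ 2) / (a * (a + 1) ^ 4) := by
      simp only [hGdef]
      push_cast
      have h1 : (a + 1) ≠ 0 := by positivity
      field_simp
      ring
    have hpos : 0 < (1 + 13 / 20 * a + 3 / 20 * a ^ 2) / (a * (a + 1) ^ 4) := by positivity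
    linarith
  have hlt : ∑' j, F j < 1 / a := lt_of_le_of_lt htsum hG0lt
  refine ⟨hsum, hlt, ?_⟩
  set T : ℕ → ℝ := fun j => 2 * a * (j : ℝ) / (a + (j : ℝ)) ^ 3 with hTdef
  have hTsucc : ∀ k : ℕ, T (k + 1) = a * F k := by
    intro k
    simp only [hTdef, hFdef]
    push_cast
    have : (a + ((k : ℝ) + 1)) ≠ 0 := by positivity
    field_simp
  have hT1 : Summable (fun k => T (k + 1)) :=
    (hsum.mul_left a).congr fun k => (hTsucc k).symm
  have hT : Summable T := (summable_nat_add_iff 1).mp hT1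
  rw [Summable.tsum_eq_zero_add hT]
  have hT0 : T 0 = 0 := by
    simp only [hTdef]
    norm_num
  rw [hT0, zero_add]
  have : ∑' k, T (k + 1) = a * ∑' k, F k := by
    rw [← tsum_mul_left]
    exact tsum_congr hTsucc
  rw [this]
  calc a * ∑' k, F k < a * (1 / a) := by
        exact mul_lt_mul_of_pos_left hlt ha
    _ = 1 := by field_simp
end

section
/- For every real x > 0 and every integer k ≥ 0, (k+1)² ψ′((k+1)x) − k² ψ′(kx + 1) < 1/x + 1/x², where ψ′ is the trigamma function. -/
noncomputable section

/-- The trigamma function `ψ′(t) = ∑_{j=1}^∞ 1/(j + t − 1)²` (for `t > 0`). -/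
def trigamma (t : ℝ) : ℝ := ∑' j : ℕ, 1 / (((j : ℝ) + 1) + t - 1) ^ 2

open Filter Finset

namespace TrigammaAux

lemma summable_shift {c : ℝ} (hc : 0 < c) :
    Summable (fun j : ℕ => 1 / ((j : ℝ) + c) ^ 2) := by
  have h1 : Summable (fun j : ℕ => 1 / ((j : ℝ) + 1) ^ 2) := by
    have h0 := (Real.summable_one_div_nat_pow (p := 2)).mpr (by norm_num)
    have h2 := (summable_nat_add_iff (f := fun n : ℕ => 1 / (n : ℝ) ^ 2) 1).mpr h0
    exact h2.congr fun j => by push_cast; ring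
  refine Summable.of_nonneg_of_le (fun j => by positivity) (fun j => ?_)
    (h1.mul_left (((c + 1) / c) ^ 2))
  have hj : (0:ℝ) ≤ (j : ℝ) := j.cast_nonneg
  have key : c * ((j : ℝ) + 1) ≤ (c + 1) * ((j : ℝ) + c) := by nlinarith [sq_nonneg c]
  have h3 : ((c + 1) / c) ^ 2 * (1 / ((j : ℝ) + 1) ^ 2) = ((c + 1) / (c * ((j : ℝ) + 1))) ^ 2 := by
    rw [div_pow, div_pow, mul_pow, div_mul_div_comm]; ring
  rw [h3, show (1 : ℝ) / ((j : ℝ) + c) ^ 2 = (1 / ((j : ℝ) + c)) ^ 2 by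
    rw [one_div, one_div, inv_pow]]
  have h4 : (0:ℝ) < (j : ℝ) + c := by positivity
  have h5 : (0:ℝ) < c * ((j : ℝ) + 1) := by positivity
  have h6 : 1 / ((j : ℝ) + c) ≤ (c + 1) / (c * ((j : ℝ) + 1)) := by
    rw [div_le_div_iff₀ h4 h5]; nlinarith
  exact pow_le_pow_left₀ (by positivity) h6 2

lemma trigamma_eq (t : ℝ) : trigamma t = ∑' j : ℕ, 1 / ((j : ℝ) + t) ^ 2 := by
  exact tsum_congr fun j => by rw [show ((j : ℝ) + 1) + t - 1 = (j : ℝ) + t by ring]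

lemma trigamma_hasSum {t : ℝ} (ht : 0 < t) :
    HasSum (fun j : ℕ => 1 / ((j : ℝ) + t) ^ 2) (trigamma t) := by
  rw [trigamma_eq]; exact (summable_shift ht).hasSum

lemma trigamma_succ {t : ℝ} (ht : 0 < t) : trigamma t = 1 / t ^ 2 + trigamma (t + 1) := by
  rw [trigamma_eq t, trigamma_eq (t + 1), Summable.tsum_eq_zero_add (summable_shift ht)]
  norm_num
  exact tsum_congr fun j => by push_cast; ring_nf

lemma hasSum_tele {u : ℕ → ℝ} (hmono : ∀ j, u (j + 1) ≤ u j)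
    (hlim : Tendsto u atTop (nhds 0)) :
    HasSum (fun j => u j - u (j + 1)) (u 0) := by
  rw [hasSum_iff_tendsto_nat_of_nonneg (fun j => sub_nonneg.mpr (hmono j))]
  have h : ∀ n, ∑ i ∈ range n, (u i - u (i + 1)) = u 0 - u n :=
    fun n => Finset.sum_range_sub' u n
  simp only [h]
  simpa using tendsto_const_nhds.sub hlim

/-- the sequence `a m x j = m/((mx+j)(mx+j+1))`. -/
def a (m x : ℝ) (j : ℕ) : ℝ := m / ((m * x + j) * (m * x + j + 1))

/-- `u m x j = m/(mx+j)`, whose differences telescope to `a`. -/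
def u (m x : ℝ) (j : ℕ) : ℝ := m / (m * x + j)

lemma u_mono {m x : ℝ} (hx : 0 < x) (hm : 0 < m) (j : ℕ) : u m x (j + 1) ≤ u m x j := by
  unfold u
  have h1 : (0:ℝ) < m * x + j := by positivity
  push_cast
  apply div_le_div_of_nonneg_left hm.le h1
  linarith

lemma u_tendsto {m x : ℝ} (hx : 0 < x) (hm : 0 < m) :
    Tendsto (u m x) atTop (nhds 0) := by
  have h1 : Tendsto (fun j : ℕ => m * x + (j : ℝ)) atTop atTop :=
    tendsto_atTop_add_const_left _ _ tendsto_natCast_atTop_atTop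
  have h2 : Tendsto (fun j : ℕ => (m * x + (j : ℝ))⁻¹) atTop (nhds 0) :=
    h1.inv_tendsto_atTop
  have h3 := h2.const_mul m
  rw [mul_zero] at h3
  exact h3.congr fun j => by rw [u, div_eq_mul_inv]

lemma a_eq_sub {m x : ℝ} (hx : 0 < x) (hm : 0 < m) (j : ℕ) :
    a m x j = u m x j - u m x (j + 1) := by
  unfold a u
  have h1 : (0:ℝ) < m * x + j := by positivity
  have h2 : (0:ℝ) < m * x + j + 1 := by positivity
  push_cast
  field_simp
  ring

lemma hasSum_a {m x : ℝ} (hx : 0 < x) (hm : 0 < m) : HasSum (a m x) (1 / x) := by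
  have h := hasSum_tele (u_mono hx hm) (u_tendsto hx hm)
  have h0 : u m x 0 = 1 / x := by
    unfold u; push_cast; rw [add_zero]; field_simp
  rw [h0] at h
  exact h.congr_fun fun j => a_eq_sub hx hm j

lemma sum_range_a {m x : ℝ} (hx : 0 < x) (hm : 0 < m) (M : ℕ) :
    ∑ j ∈ range M, a m x j = 1 / x - m / (m * x + M) := by
  have h : ∑ j ∈ range M, a m x j = ∑ j ∈ range M, (u m x j - u m x (j + 1)) :=
    Finset.sum_congr rfl fun j _ => a_eq_sub hx hm j
  rw [h, Finset.sum_range_sub' (u m x) M]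
  have h0 : u m x 0 = 1 / x := by
    unfold u; push_cast; rw [add_zero]; field_simp
  rw [h0]; rfl

lemma a_nonneg {m x : ℝ} (hx : 0 < x) (hm : 0 < m) (j : ℕ) : 0 ≤ a m x j := by
  unfold a; positivity

lemma a_mono {m x : ℝ} (hx : 0 < x) (hm : 0 < m) (j : ℕ) : a m x (j + 1) ≤ a m x j := by
  unfold a
  have h1 : (0:ℝ) < m * x + j := by positivity
  push_cast
  apply div_le_div_of_nonneg_left hm.le (by positivity)
  nlinarith [j.cast_nonneg (α := ℝ)]

lemma hasSum_a_sq {m x : ℝ} (hx : 0 < x) (hm : 0 < m) :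
    HasSum (fun j => (a m x j) ^ 2)
      (1 / x ^ 2 + 2 * m ^ 2 * trigamma (m * x + 1) - 2 * m / x) := by
  have hmx : (0:ℝ) < m * x := by positivity
  have hS1 : HasSum (fun j : ℕ => 1 / ((j : ℝ) + m * x) ^ 2) (trigamma (m * x)) :=
    trigamma_hasSum hmx
  have hS2 : HasSum (fun j : ℕ => 1 / ((j : ℝ) + (m * x + 1)) ^ 2) (trigamma (m * x + 1)) :=
    trigamma_hasSum (by linarith)
  have hA := hasSum_a hx hm
  have H := ((hS1.mul_left (m ^ 2)).add (hS2.mul_left (m ^ 2))).sub (hA.mul_left (2 * m))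
  have hfun : ∀ j : ℕ,
      m ^ 2 * (1 / ((j : ℝ) + m * x) ^ 2) + m ^ 2 * (1 / ((j : ℝ) + (m * x + 1)) ^ 2)
        - 2 * m * a m x j = (a m x j) ^ 2 := by
    intro j
    unfold a
    have h1 : (0:ℝ) < m * x + j := by positivity
    have h2 : (0:ℝ) < m * x + j + 1 := by positivity
    field_simp
    ring
  have H2 := H.congr_fun fun j => (hfun j).symm
  have hval : m ^ 2 * trigamma (m * x) + m ^ 2 * trigamma (m * x + 1) - 2 * m * (1 / x)
      = 1 / x ^ 2 + 2 * m ^ 2 * trigamma (m * x + 1) - 2 * m / x := by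
    rw [trigamma_succ hmx]
    field_simp
    ring
  rwa [hval] at H2

/-- Abel-summation comparison: if `b` is majorized by `a` (partial sums dominated, equal behavior
at infinity expressed through summability of squares), both nonneg and nonincreasing, with strict
inequalities at the start, then `∑ b² < ∑ a²`. -/
lemma tsum_sq_lt {a b : ℕ → ℝ}
    (ha0 : ∀ j, 0 ≤ a j) (hb0 : ∀ j, 0 ≤ b j)
    (hamono : ∀ j, a (j + 1) ≤ a j) (hbmono : ∀ j, b (j + 1) ≤ b j)
    (hC : ∀ M, ∑ j ∈ range M, b j ≤ ∑ j ∈ range M, a j)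
    (hsa : Summable (fun j => (a j) ^ 2)) (hsb : Summable (fun j => (b j) ^ 2))
    (hC1 : b 0 < a 0) (hw : a 1 + b 1 < a 0 + b 0) :
    ∑' j, (b j) ^ 2 < ∑' j, (a j) ^ 2 := by
  set ε : ℝ := (a 0 - b 0) * ((a 0 + b 0) - (a 1 + b 1)) with hε
  have hεpos : 0 < ε := mul_pos (by linarith) (by linarith)
  set C : ℕ → ℝ := fun M => ∑ j ∈ range M, (a j - b j) with hCdef
  have hCnn : ∀ M, 0 ≤ C M := by
    intro M
    have := hC M
    simp only [hCdef, Finset.sum_sub_distrib]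
    linarith
  have key : ∀ M, 1 ≤ M → C M * (a M + b M) + ε ≤ ∑ j ∈ range M, ((a j) ^ 2 - (b j) ^ 2) := by
    intro M hM
    induction M with
    | zero => omega
    | succ N ih =>
      rcases Nat.eq_or_lt_of_le hM with h1 | h1
      · -- N + 1 = 1, i.e. N = 0
        have hN : N = 0 := by omega
        subst hN
        have hc : C 1 = a 0 - b 0 := by simp [hCdef]
        rw [Finset.sum_range_one, hc]
        nlinarith
      · have hN1 : 1 ≤ N := by omega
        have ih2 := ih hN1
        have hCs : C (N + 1) = C N + (a N - b N) := by
          simp only [hCdef, Finset.sum_range_succ]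
        rw [Finset.sum_range_succ]
        have hwmono : a (N + 1) + b (N + 1) ≤ a N + b N := by
          have := hamono N; have := hbmono N; linarith
        have h2 : C (N + 1) * (a (N + 1) + b (N + 1)) ≤ C (N + 1) * (a N + b N) :=
          mul_le_mul_of_nonneg_left hwmono (hCnn (N + 1))
        have h3 : C (N + 1) * (a N + b N) = C N * (a N + b N) + (a N - b N) * (a N + b N) := by
          rw [hCs]; ring
        have h4 : (a N - b N) * (a N + b N) = (a N) ^ 2 - (b N) ^ 2 := by ring
        linarith
  have hdiff : HasSum (fun j => (a j) ^ 2 - (b j) ^ 2) (∑' j, (a j) ^ 2 - ∑' j, (b j) ^ 2) :=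
    hsa.hasSum.sub hsb.hasSum
  have htend := hdiff.tendsto_sum_nat
  have hfinal : ε ≤ ∑' j, (a j) ^ 2 - ∑' j, (b j) ^ 2 := by
    refine ge_of_tendsto htend ?_
    filter_upwards [eventually_ge_atTop 1] with M hM
    have h1 := key M hM
    have h2 : 0 ≤ C M * (a M + b M) := by
      apply mul_nonneg (hCnn M)
      have := ha0 M; have := hb0 M; linarith
    linarith
  linarith

end TrigammaAux

open TrigammaAux

/-- For every real `x > 0` and every integer `k ≥ 0`:
`(k+1)² ψ′((k+1)x) − k² ψ′(kx + 1) < 1/x + 1/x²`. -/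
theorem trigamma_difference_lt (x : ℝ) (hx : 0 < x) (k : ℕ) :
    ((k : ℝ) + 1) ^ 2 * trigamma (((k : ℝ) + 1) * x) -
      (k : ℝ) ^ 2 * trigamma ((k : ℝ) * x + 1) < 1 / x + 1 / x ^ 2 := by
  rcases Nat.eq_zero_or_pos k with hk0 | hkpos
  · -- k = 0 : show trigamma x < 1/x + 1/x²
    subst hk0
    have hx1 : (0:ℝ) < x + 1 := by linarith
    have key : trigamma (x + 1) < 1 / x := by
      have hA : HasSum (a 1 x) (1 / x) := hasSum_a hx one_pos
      have hT : HasSum (fun j : ℕ => 1 / ((j : ℝ) + (x + 1)) ^ 2) (trigamma (x + 1)) :=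
        trigamma_hasSum hx1
      have hle : ∀ j : ℕ, 1 / ((j : ℝ) + (x + 1)) ^ 2 ≤ a 1 x j := by
        intro j
        unfold a
        have h1 : (0:ℝ) < x + j := by positivity
        have h2 : (0:ℝ) < (j : ℝ) + (x + 1) := by positivity
        rw [one_mul, div_le_div_iff₀ (by positivity) (by positivity)]
        nlinarith
      have hlt : (fun j : ℕ => 1 / ((j : ℝ) + (x + 1)) ^ 2) 0 < a 1 x 0 := by
        show 1 / (((0:ℕ) : ℝ) + (x + 1)) ^ 2 < a 1 x 0
        unfold a
        have h1 : (0:ℝ) < x := hx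
        push_cast
        rw [div_lt_div_iff₀ (by positivity) (by positivity)]
        nlinarith
      calc trigamma (x + 1) = ∑' j : ℕ, 1 / ((j : ℝ) + (x + 1)) ^ 2 := trigamma_eq _
        _ < ∑' j, a 1 x j := Summable.tsum_lt_tsum hle hlt hT.summable hA.summable
        _ = 1 / x := hA.tsum_eq
    have hts := trigamma_succ hx
    push_cast
    rw [show ((0:ℝ) + 1) * x = x by ring]
    rw [hts]
    nlinarith [sq_nonneg x]
  · -- k ≥ 1
    set m : ℝ := (k : ℝ) with hm
    have hmpos : (0:ℝ) < m := by rw [hm]; exact_mod_cast hkpos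
    have hm1 : (0:ℝ) < m + 1 := by linarith
    -- the two sequences
    have hA := hasSum_a_sq hx hmpos (x := x)
    have hB := hasSum_a_sq hx hm1 (x := x)
    have main : ∑' j, (a (m + 1) x j) ^ 2 < ∑' j, (a m x j) ^ 2 := by
      apply tsum_sq_lt (a_nonneg hx hmpos) (a_nonneg hx hm1)
        (a_mono hx hmpos) (a_mono hx hm1) ?_ hA.summable hB.summable ?_ ?_
      · -- partial sums
        intro M
        rw [sum_range_a hx hmpos, sum_range_a hx hm1]
        have h1 : (0:ℝ) < m * x + M := by positivity
        have h2 : (0:ℝ) < (m + 1) * x + M := by positivity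
        have h3 : (m + 1) / ((m + 1) * x + M) ≥ m / (m * x + M) := by
          rw [ge_iff_le, div_le_div_iff₀ h1 h2]
          nlinarith [M.cast_nonneg (α := ℝ)]
        linarith
      · -- b 0 < a 0
        unfold a
        push_cast
        have h1 : (0:ℝ) < m * x := by positivity
        have h2 : (0:ℝ) < (m + 1) * x := by positivity
        rw [div_lt_div_iff₀ (by nlinarith) (by nlinarith)]
        nlinarith
      · -- a 1 + b 1 < a 0 + b 0
        have h1 : a m x 1 < a m x 0 := by
          unfold a
          push_cast
          have h1 : (0:ℝ) < m * x := by positivity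
          rw [div_lt_div_iff₀ (by nlinarith) (by nlinarith)]
          nlinarith
        have h2 := a_mono hx hm1 0
        have h3 : a (m + 1) x (0 + 1) = a (m + 1) x 1 := rfl
        linarith [a_mono hx hm1 0]
    -- translate back to trigamma
    rw [hA.tsum_eq, hB.tsum_eq] at main
    have hkey : (m + 1) ^ 2 * trigamma ((m + 1) * x + 1) - m ^ 2 * trigamma (m * x + 1)
        < 1 / x := by
      have e1 : 2 * (m + 1) / x = 2 * m / x + 2 * (1 / x) := by ring
      have e2 : 2 * (m + 1) ^ 2 * trigamma ((m + 1) * x + 1)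
          = 2 * ((m + 1) ^ 2 * trigamma ((m + 1) * x + 1)) := by ring
      have e3 : 2 * m ^ 2 * trigamma (m * x + 1) = 2 * (m ^ 2 * trigamma (m * x + 1)) := by ring
      rw [e1, e2, e3] at main
      linarith
    have hsucc := trigamma_succ (t := (m + 1) * x) (by positivity)
    rw [hsucc]
    have hexp : (m + 1) ^ 2 * (1 / ((m + 1) * x) ^ 2) = 1 / x ^ 2 := by
      field_simp
    calc (m + 1) ^ 2 * (1 / ((m + 1) * x) ^ 2 + trigamma ((m + 1) * x + 1))
          - m ^ 2 * trigamma (m * x + 1)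
        = 1 / x ^ 2 + ((m + 1) ^ 2 * trigamma ((m + 1) * x + 1)
            - m ^ 2 * trigamma (m * x + 1)) := by rw [mul_add, hexp]; ring
      _ < 1 / x ^ 2 + 1 / x := by linarith
      _ = 1 / x + 1 / x ^ 2 := by ring
end
end

section
/- Let q > 0, γ > 1, let k ≥ 0 be an integer, and let r ∈ (−2k(γ−1)−1, 3γ−1+2k). Then ∫₀^∞ α^{2k(γ−1)+r} / ((γ−1)α^γ + q)^{2k+3} dα = [Γ(3 + (2k−1−r)/γ) · Γ(2k + (1+r−2k)/γ)] / [γ · (γ−1)^{(1+r)/γ} · q^{3−(1+r)/γ} · Γ(2k+3)] · (q (γ−1)^{γ−1})^{−2k/γ}, where Γ is the Gamma function. -/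
open MeasureTheory Set

lemma real_beta (a b : ℝ) (ha : 0 < a) (hb : 0 < b) :
    ∫ t in (0:ℝ)..1, t ^ (a-1) * (1-t) ^ (b-1)
      = Real.Gamma a * Real.Gamma b / Real.Gamma (a+b) := by
  have h := Complex.Gamma_mul_Gamma_eq_betaIntegral
    (show 0 < (a:ℂ).re by simpa using ha) (show 0 < (b:ℂ).re by simpa using hb)
  have hbeta : Complex.betaIntegral a b
      = ((∫ t in (0:ℝ)..1, t ^ (a-1) * (1-t) ^ (b-1) : ℝ) : ℂ) := by
    rw [Complex.betaIntegral, ← intervalIntegral.integral_ofReal]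
    refine intervalIntegral.integral_congr_ae ?_
    have : ∀ᵐ x : ℝ, x ∈ Set.uIoc (0:ℝ) 1 →
        (x:ℂ) ^ ((a:ℂ)-1) * (1-(x:ℂ)) ^ ((b:ℂ)-1)
          = ((x ^ (a-1) * (1-x) ^ (b-1) : ℝ) : ℂ) := by
      filter_upwards [] with x hx
      rw [Set.uIoc_of_le (by norm_num : (0:ℝ) ≤ 1)] at hx
      have hx0 : (0:ℝ) ≤ x := le_of_lt hx.1
      have hx1 : (0:ℝ) ≤ 1 - x := by linarith [hx.2]
      rw [Complex.ofReal_mul, Complex.ofReal_cpow hx0, Complex.ofReal_cpow hx1]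
      push_cast
      ring
    exact this
  rw [hbeta] at h
  have hG : Complex.Gamma ((a:ℂ)+(b:ℂ)) = (Real.Gamma (a+b) : ℂ) := by
    rw [← Complex.ofReal_add, Complex.Gamma_ofReal]
  rw [Complex.Gamma_ofReal, Complex.Gamma_ofReal, hG, ← Complex.ofReal_mul,
    ← Complex.ofReal_mul] at h
  have := Complex.ofReal_injective h
  have hGab : Real.Gamma (a+b) ≠ 0 := (Real.Gamma_pos_of_pos (by linarith)).ne'
  field_simp
  linarith [this]


lemma beta_Ioi (a b : ℝ) (ha : 0 < a) (hb : 0 < b) :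
    ∫ x in Ioi (0:ℝ), x ^ (a-1) * (1+x) ^ (-(a+b))
      = Real.Gamma a * Real.Gamma b / Real.Gamma (a+b) := by
  set f : ℝ → ℝ := fun t => t / (1-t) with hf_def
  have himg : f '' Ioo 0 1 = Ioi (0:ℝ) := by
    ext x
    constructor
    · rintro ⟨t, ht, rfl⟩
      exact div_pos ht.1 (by linarith [ht.2])
    · intro hx
      rw [mem_Ioi] at hx
      refine ⟨x / (1+x), ⟨div_pos hx (by linarith), ?_⟩, ?_⟩
      · rw [div_lt_one (by linarith)]; linarith
      · simp only [hf_def]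
        have h1 : (0:ℝ) < 1 + x := by linarith
        field_simp
        ring
  have hderiv : ∀ t ∈ Ioo (0:ℝ) 1,
      HasDerivWithinAt f (((1-t)^2)⁻¹) (Ioo 0 1) t := by
    intro t ht
    have h1t : (1:ℝ) - t ≠ 0 := by have := ht.2; intro h; linarith [h]
    have : HasDerivAt f ((1 * (1-t) - t * (0-1)) / (1-t)^2) t :=
      (hasDerivAt_id t).div (((hasDerivAt_const t (1:ℝ)).sub (hasDerivAt_id t))) h1t
    have h2 : (1 * (1-t) - t * (0-1)) / (1-t)^2 = ((1-t)^2)⁻¹ := by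
      field_simp
      ring
    rw [h2] at this
    exact this.hasDerivWithinAt
  have hinj : InjOn f (Ioo 0 1) := by
    intro s hs t ht h
    have h1s : (1:ℝ) - s ≠ 0 := by have := hs.2; intro h'; linarith
    have h1t : (1:ℝ) - t ≠ 0 := by have := ht.2; intro h'; linarith
    simp only [hf_def] at h
    rw [div_eq_div_iff h1s h1t] at h
    linarith
  have key := integral_image_eq_integral_abs_deriv_smul measurableSet_Ioo hderiv hinj
    (fun x => x ^ (a-1) * (1+x) ^ (-(a+b)))
  rw [himg] at key
  rw [key]
  rw [← real_beta a b ha hb, intervalIntegral.integral_of_le (by norm_num : (0:ℝ) ≤ 1),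
    integral_Ioc_eq_integral_Ioo]
  refine setIntegral_congr_fun measurableSet_Ioo ?_
  intro t ht
  have ht0 : 0 < t := ht.1
  have h1t : 0 < 1 - t := by have := ht.2; linarith
  have hft : f t = t / (1-t) := rfl
  have h1f : 1 + f t = (1-t)⁻¹ := by
    rw [hft]; field_simp; ring
  simp only [smul_eq_mul, h1f]
  simp only [hft]
  rw [abs_of_pos (by positivity), Real.div_rpow ht0.le h1t.le,
    Real.inv_rpow h1t.le, ← Real.rpow_neg h1t.le, neg_neg,
    div_eq_mul_inv, ← Real.rpow_neg h1t.le,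
    show ((1-t)^2)⁻¹ = (1-t)^(-2:ℝ) by
      rw [← Real.rpow_natCast (1-t) 2, ← Real.rpow_neg h1t.le]; norm_num]
  have e : (1-t)^(-2:ℝ) * (t^(a-1) * (1-t)^(-(a-1)) * (1-t)^(a+b))
      = t^(a-1) * ((1-t)^(-2:ℝ) * (1-t)^(-(a-1)) * (1-t)^(a+b)) := by ring
  rw [e, ← Real.rpow_add h1t, ← Real.rpow_add h1t]
  congr 1
  ring

/-- For `q > 0`, `γ > 1`, integer `k ≥ 0` and
`r ∈ (−2k(γ−1)−1, 3γ−1+2k)`: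
`∫₀^∞ α^{2k(γ−1)+r}/((γ−1)α^γ + q)^{2k+3} dα
  = Γ(3+(2k−1−r)/γ)·Γ(2k+(1+r−2k)/γ) / [γ (γ−1)^{(1+r)/γ} q^{3−(1+r)/γ} Γ(2k+3)]
    · (q(γ−1)^{γ−1})^{−2k/γ}`. -/
theorem integral_rpow_div_pow (γ q r : ℝ) (k : ℕ) (hγ : 1 < γ) (hq : 0 < q)
    (hr : r ∈ Set.Ioo (-(2 * (k : ℝ) * (γ - 1)) - 1) (3 * γ - 1 + 2 * (k : ℝ))) :
    ∫ α in Set.Ioi (0 : ℝ),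
        α ^ (2 * (k : ℝ) * (γ - 1) + r) / ((γ - 1) * α ^ γ + q) ^ (2 * k + 3) =
      Real.Gamma (3 + (2 * (k : ℝ) - 1 - r) / γ) *
          Real.Gamma (2 * (k : ℝ) + (1 + r - 2 * (k : ℝ)) / γ) /
          (γ * (γ - 1) ^ ((1 + r) / γ) * q ^ (3 - (1 + r) / γ) *
            Real.Gamma (2 * (k : ℝ) + 3)) *
        (q * (γ - 1) ^ (γ - 1)) ^ (-(2 * (k : ℝ)) / γ) := by
  have hγ0 : (0:ℝ) < γ := by linarith
  have hX : (0:ℝ) < γ - 1 := by linarith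
  set m : ℝ := 2 * (k:ℝ) * (γ - 1) + r with hm
  set a : ℝ := (m + 1) / γ with ha_def
  set b : ℝ := (3 * γ + 2 * (k:ℝ) - 1 - r) / γ with hb_def
  have ha : 0 < a := by
    apply div_pos _ hγ0
    have := hr.1
    simp only [hm]; linarith
  have hb : 0 < b := by
    apply div_pos _ hγ0
    have := hr.2
    linarith
  have hab : a + b = 2 * (k:ℝ) + 3 := by
    rw [ha_def, hb_def, hm, ← add_div, div_eq_iff hγ0.ne']
    ring
  set b0 : ℝ := q / (γ - 1) with hb0_def
  have hb0 : 0 < b0 := div_pos hq hX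
  -- step 1: substitute y = α^γ
  set g : ℝ → ℝ := fun y => (1/γ) * (y ^ (a - 1) / ((γ-1) * y + q) ^ (2*k+3)) with hg
  have step1 : (∫ α in Ioi (0:ℝ), α ^ m / ((γ - 1) * α ^ γ + q) ^ (2 * k + 3))
      = ∫ y in Ioi (0:ℝ), g y := by
    rw [← integral_comp_rpow_Ioi_of_pos (g := g) hγ0]
    refine setIntegral_congr_fun measurableSet_Ioi ?_
    intro x hx
    rw [mem_Ioi] at hx
    simp only [hg, smul_eq_mul]
    rw [← Real.rpow_mul hx.le]
    have hgam : γ * (a - 1) = m + 1 - γ := by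
      rw [ha_def, mul_sub, mul_div_assoc', mul_comm γ (m+1), mul_div_assoc, div_self hγ0.ne']
      ring
    rw [hgam]
    have hγne : γ ≠ 0 := hγ0.ne'
    symm
    calc γ * x ^ (γ-1) * (1/γ * (x ^ (m+1-γ) / ((γ-1) * x ^ γ + q) ^ (2*k+3)))
        = x ^ (γ-1) * x ^ (m+1-γ) / ((γ-1) * x ^ γ + q) ^ (2*k+3) := by
          field_simp
      _ = x ^ m / ((γ-1) * x ^ γ + q) ^ (2*k+3) := by
          rw [← Real.rpow_add hx]; ring_nf
  -- step 2: pull out 1/γ and substitute y = b0 * u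
  set h : ℝ → ℝ := fun y => y ^ (a - 1) / ((γ-1) * y + q) ^ (2*k+3) with hh
  have step2 : (∫ y in Ioi (0:ℝ), g y) = (1/γ) * ∫ y in Ioi (0:ℝ), h y := by
    rw [hg, integral_const_mul]
  have step3 : (∫ y in Ioi (0:ℝ), h y) = b0 * ∫ u in Ioi (0:ℝ), h (b0 * u) := by
    have := integral_comp_mul_left_Ioi h 0 hb0
    rw [mul_zero] at this
    rw [this, smul_eq_mul, ← mul_assoc, mul_inv_cancel₀ hb0.ne', one_mul]
  have step4 : (∫ u in Ioi (0:ℝ), h (b0 * u))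
      = (b0 ^ (a-1) / q ^ (2*k+3)) *
          ∫ u in Ioi (0:ℝ), u ^ (a-1) * (1+u) ^ (-(a+b)) := by
    rw [← integral_const_mul]
    refine setIntegral_congr_fun measurableSet_Ioi ?_
    intro u hu
    rw [mem_Ioi] at hu
    simp only [hh]
    have hden : (γ-1) * (b0 * u) + q = q * (1 + u) := by
      rw [hb0_def]; field_simp; ring
    rw [hden, Real.mul_rpow hb0.le hu.le, mul_pow]
    have h1u : (0:ℝ) < 1 + u := by linarith
    have hpow : ((1+u) ^ (2*k+3) : ℝ) = (1+u) ^ (a+b) := by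
      rw [← Real.rpow_natCast (1+u) (2*k+3), hab]
      push_cast
      ring_nf
    rw [hpow, Real.rpow_neg h1u.le]
    field_simp
  rw [step1, step2, step3, step4, beta_Ioi a b ha hb]
  -- rewrite the Gamma arguments on the RHS
  have hGb : 3 + (2*(k:ℝ)-1-r)/γ = b := by
    rw [hb_def]; field_simp; ring
  have hGa : 2*(k:ℝ) + (1+r-2*(k:ℝ))/γ = a := by
    rw [ha_def, hm]; field_simp; ring
  rw [hGb, hGa, show (2*(k:ℝ)+3) = a + b from hab.symm]
  -- the constant identity
  have hconst : (1/γ) * (b0 * (b0 ^ (a-1) / q ^ (2*k+3)))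
      = 1 / (γ * (γ-1) ^ ((1+r)/γ) * q ^ (3-(1+r)/γ)) *
        (q * (γ-1) ^ (γ-1)) ^ (-(2*(k:ℝ))/γ) := by
    have hb0a : b0 * b0 ^ (a-1) = b0 ^ a := by
      nth_rewrite 1 [← Real.rpow_one b0]
      rw [← Real.rpow_add hb0]; ring_nf
    rw [mul_div_assoc'] at *
    rw [show b0 * b0 ^ (a-1) / q ^ (2*k+3) = b0 ^ a / q ^ (2*k+3) by rw [hb0a]]
    rw [hb0_def, Real.div_rpow hq.le hX.le,
      Real.mul_rpow hq.le (Real.rpow_nonneg hX.le _), ← Real.rpow_mul hX.le,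
      ← Real.rpow_natCast q (2*k+3)]
    have Hq : ∀ e : ℝ, q ^ e = Real.exp (Real.log q * e) :=
      fun e => Real.rpow_def_of_pos hq e
    have HXe : ∀ e : ℝ, (γ-1) ^ e = Real.exp (Real.log (γ-1) * e) :=
      fun e => Real.rpow_def_of_pos hX e
    rw [show 1 / (γ * (γ-1) ^ ((1+r)/γ) * q ^ (3-(1+r)/γ))
        = 1/γ * (1 / ((γ-1) ^ ((1+r)/γ) * q ^ (3-(1+r)/γ))) by ring,
      mul_assoc]
    congr 1
    simp only [Hq, HXe]
    rw [← Real.exp_sub, ← Real.exp_sub, ← Real.exp_add,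
      one_div, ← Real.exp_neg, ← Real.exp_add, ← Real.exp_add]
    rw [Real.exp_eq_exp]
    push_cast
    rw [ha_def, hm]
    field_simp
    ring
  calc (1/γ) * (b0 * (b0 ^ (a-1) / q ^ (2*k+3) *
          (Real.Gamma a * Real.Gamma b / Real.Gamma (a+b))))
      = ((1/γ) * (b0 * (b0 ^ (a-1) / q ^ (2*k+3)))) *
          (Real.Gamma a * Real.Gamma b / Real.Gamma (a+b)) := by ring
    _ = _ := by rw [hconst]; ring
end
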